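/- Let β ≥ 1 be an integer and let u, v be real numbers with v ≠ 0. Then u · v^{2β} · D^{(β−1)}(0) = Σ_{k=0}^{β−1} [(β−1+k)!/(k!(β−1−k)!)] (uv)^{β−k}, where D^{(β−1)}(0) denotes the (β−1)-st derivative at λ = 0 of the function λ ↦ e^{uλ}/(v−λ)^{β}. Equivalently, this quantity equals 2^{β} Q_{β,0}(uv/2), where Q_{β,0}(x) = Σ_{k=0}^{β−1} [(β+k−1)!/(k!(β−k−1)!)] 2^{−k} x^{β−k}. -/

import Mathlib

/-!
By Leibniz' rule for `e^{uλ} · (v - λ)^{-β}`, the `n`-th derivative at `0` is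
`Σ_j C(n,j) u^{n-j} β^{(j)} v^{-β-j}`, where `β^{(j)} = β(β+1)⋯(β+j-1)` is the rising
factorial. For `n = β - 1` one has `C(β-1,j) β^{(j)} = (β-1+j)!/(j!(β-1-j)!)`, and the factor `u v^{2β}`
turns `u^{β-1-j} v^{-β-j}` into `(uv)^{β-j}`. The Carlitz form is the same sum once `2^β` is
split as `2^k 2^{β-k}`.
-/

open Finset

/-- The Carlitz polynomial `Q_{β,0}(x) = Σ_{k=0}^{β-1} (β+k-1)!/(k!(β-k-1)!) 2^{-k} x^{β-k}`,
as a function on `ℝ`. -/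
noncomputable def carlitzQ (β : ℕ) (x : ℝ) : ℝ :=
  ∑ k ∈ Finset.range β,
    (Nat.factorial (β + k - 1) : ℝ) / (Nat.factorial k * Nat.factorial (β - k - 1)) *
      (1 / 2) ^ k * x ^ (β - k)

theorem neg_one_pow_mul_prod_range_neg_sub {𝕜 : Type*} [CommRing 𝕜] (β j : ℕ) :
    (-1 : 𝕜) ^ j * ∏ i ∈ range j, (((-β : ℤ) : 𝕜) - i) = β.ascFactorial j := by
  rw [Nat.ascFactorial_eq_prod_range, pow_eq_prod_const, ← prod_mul_distrib]
  push_cast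
  exact prod_congr rfl fun i _ => by ring

theorem iteratedDeriv_inv_const_sub_pow {𝕜 : Type*} [NontriviallyNormedField 𝕜]
    (β j : ℕ) (v x : 𝕜) :
    iteratedDeriv j (fun l => ((v - l) ^ β)⁻¹) x = β.ascFactorial j / (v - x) ^ (β + j) := by
  have hzpow : (fun l : 𝕜 => ((v - l) ^ β)⁻¹) = fun l => (v - l) ^ (-(β : ℤ)) := by
    simp [zpow_neg]
  rw [hzpow, iteratedDeriv_comp_const_sub j (fun y : 𝕜 => y ^ (-(β : ℤ))) v]
  beta_reduce
  rw [iteratedDeriv_eq_iterate, iter_deriv_zpow, smul_eq_mul, ← mul_assoc,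
    neg_one_pow_mul_prod_range_neg_sub, div_eq_mul_inv, ← zpow_natCast, ← zpow_neg]
  congr 2
  push_cast; ring

theorem iteratedDeriv_exp_mul_div_sub_pow (n β : ℕ) {u v x : ℝ} (hx : x ≠ v) :
    iteratedDeriv n (fun l => Real.exp (u * l) / (v - l) ^ β) x =
      Real.exp (u * x) * ∑ j ∈ range (n + 1),
        n.choose j * u ^ (n - j) * β.ascFactorial j / (v - x) ^ (β + j) := by
  have hvx : (v - x) ^ β ≠ 0 := pow_ne_zero _ (sub_ne_zero.mpr hx.symm)
  have hsplit : (fun l => Real.exp (u * l) / (v - l) ^ β) =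
      (fun l => ((v - l) ^ β)⁻¹) * fun l => Real.exp (u * l) := by
    funext l; simp [div_eq_mul_inv, mul_comm]
  rw [hsplit, iteratedDeriv_mul (by fun_prop (disch := exact hvx)) (by fun_prop), mul_sum]
  refine sum_congr rfl fun j hj => ?_
  rw [iteratedDeriv_exp_const_mul, iteratedDeriv_inv_const_sub_pow]
  ring

theorem choose_mul_succ_ascFactorial {K : Type*} [Field K] [CharZero K] {m j : ℕ} (hj : j ≤ m) :
    (m.choose j : K) * (m + 1).ascFactorial j =
      (m + j).factorial / (j.factorial * (m - j).factorial) := by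
  rw [eq_div_iff (by simp [Nat.factorial_ne_zero])]
  exact_mod_cast (by
    rw [← Nat.factorial_mul_ascFactorial, ← Nat.choose_mul_factorial_mul_factorial hj]
    ring : m.choose j * (m + 1).ascFactorial j * (j.factorial * (m - j).factorial) =
      (m + j).factorial)

theorem two_pow_mul_carlitzQ_half (m : ℕ) (x : ℝ) :
    2 ^ (m + 1) * carlitzQ (m + 1) (x / 2) =
      ∑ k ∈ range (m + 1), ((m + k).factorial : ℝ) / (k.factorial * (m - k).factorial) *
        x ^ (m + 1 - k) := by
  rw [carlitzQ, mul_sum]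
  refine sum_congr rfl fun k hk => ?_
  have hk : k ≤ m := Nat.lt_succ_iff.mp (mem_range.mp hk)
  have htwo : (2 : ℝ) ^ (m + 1) = 2 ^ k * 2 ^ (m + 1 - k) := by
    rw [← pow_add, Nat.add_sub_cancel' (by omega)]
  rw [show m + 1 + k - 1 = m + k by omega, show m + 1 - k - 1 = m - k by omega, htwo,
    one_div_pow, div_pow]
  field_simp

theorem statement3 (β : ℕ) (hβ : 1 ≤ β) (u v : ℝ) (hv : v ≠ 0) :
    u * v ^ (2 * β) *
        iteratedDeriv (β - 1) (fun l : ℝ => Real.exp (u * l) / (v - l) ^ β) 0 =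
      ∑ k ∈ Finset.range β,
        (Nat.factorial (β - 1 + k) : ℝ) / (Nat.factorial k * Nat.factorial (β - 1 - k)) *
          (u * v) ^ (β - k) ∧
    u * v ^ (2 * β) *
        iteratedDeriv (β - 1) (fun l : ℝ => Real.exp (u * l) / (v - l) ^ β) 0 =
      2 ^ β * carlitzQ β (u * v / 2) := by
  obtain ⟨m, rfl⟩ : ∃ m, β = m + 1 := ⟨β - 1, by omega⟩
  simp only [Nat.add_sub_cancel]
  have hsum : u * v ^ (2 * (m + 1)) *
        iteratedDeriv m (fun l : ℝ => Real.exp (u * l) / (v - l) ^ (m + 1)) 0 =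
      ∑ k ∈ range (m + 1), ((m + k).factorial : ℝ) / (k.factorial * (m - k).factorial) *
        (u * v) ^ (m + 1 - k) := by
    rw [iteratedDeriv_exp_mul_div_sub_pow m (m + 1) hv.symm]
    simp only [mul_zero, Real.exp_zero, one_mul, sub_zero, mul_sum]
    refine sum_congr rfl fun k hk => ?_
    have hk : k ≤ m := Nat.lt_succ_iff.mp (mem_range.mp hk)
    have hv2 : v ^ (2 * (m + 1)) = v ^ (m + 1 - k) * v ^ (m + 1 + k) := by
      rw [← pow_add]; congr 1; omega
    rw [← choose_mul_succ_ascFactorial hk, hv2, mul_pow, show m + 1 - k = m - k + 1 by omega]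
    field_simp
    ring
  exact ⟨hsum, hsum.trans (two_pow_mul_carlitzQ_half m (u * v)).symm⟩
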